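/- arXiv:2404.05055 — 3 statements merged into one kernel-verified Lean document; each statement's English description precedes it below -/
import Mathlib

section
/- The VaR Bellman optimality operator T_VaR defined by (T_VaR v)_s = max_{a∈A} VaR_α[ p̃_{s,a}ᵀ(r_{s,a} + γv) ] is a γ-contraction on ℝ^S with respect to the sup-norm: ‖T_VaR u − T_VaR v‖_∞ ≤ γ‖u − v‖_∞. -/
/-!
Raising every value of a random variable by at most `c` raises its VaR by at most `c`. For a
probability vector `p` and `γ ≥ 0`, the return `pᵀ (r + γ u)` exceeds `pᵀ (r + γ v)` by at most
`γ ‖u - v‖∞` in every outcome, so each VaR, and hence their maximum over actions, moves by at most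
`γ ‖u - v‖∞`.
-/

open MeasureTheory

/-- Value at Risk at confidence level α: VaR_α[X] = sup {t | Pr[X ≥ t] ≥ 1 - α}. -/
noncomputable def VaR {Ω : Type*} [MeasurableSpace Ω] (P : Measure Ω)
    (X : Ω → ℝ) (α : ℝ) : ℝ :=
  sSup {t : ℝ | 1 - α ≤ (P {ω | t ≤ X ω}).toReal}

/-- The VaR Bellman optimality operator:
`(T_VaR v) s = max_a VaR_α [ p̃_{s,a}ᵀ (r_{s,a} + γ v) ]`. -/
noncomputable def TVaR {S A Ω : Type*} [Fintype S] [Fintype A] [Nonempty A]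
    [MeasurableSpace Ω] (P : Measure Ω) (α γ : ℝ)
    (r : S → A → S → ℝ) (p : S → A → Ω → S → ℝ) (v : S → ℝ) : S → ℝ :=
  fun s => ⨆ a : A, VaR P (fun ω => ∑ s' : S, p s a ω s' * (r s a s' + γ * v s')) α

section VaR

variable {Ω : Type*} [MeasurableSpace Ω] (P : Measure Ω) {α : ℝ}

lemma bddAbove_VaR_set_of_bddAbove {Y : Ω → ℝ} (hY : BddAbove (Set.range Y)) (hα : α < 1) :
    BddAbove {t : ℝ | 1 - α ≤ (P {ω | t ≤ Y ω}).toReal} := by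
  obtain ⟨M, hM⟩ := hY
  refine ⟨M, fun t ht => ?_⟩
  by_contra! hMt
  have hempty : {ω | t ≤ Y ω} = ∅ :=
    Set.eq_empty_of_forall_notMem fun ω hω => (hMt.trans_le hω).not_ge (hM ⟨ω, rfl⟩)
  rw [Set.mem_ofPred_eq, hempty, measure_empty, ENNReal.toReal_zero] at ht
  linarith

lemma nonempty_VaR_set_of_bddBelow [IsProbabilityMeasure P] {X : Ω → ℝ}
    (hX : BddBelow (Set.range X)) (hα : 0 ≤ α) :
    {t : ℝ | 1 - α ≤ (P {ω | t ≤ X ω}).toReal}.Nonempty := by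
  obtain ⟨m, hm⟩ := hX
  refine ⟨m, ?_⟩
  have huniv : {ω | m ≤ X ω} = Set.univ := Set.eq_univ_of_forall fun ω => hm ⟨ω, rfl⟩
  rw [Set.mem_ofPred_eq, huniv, measure_univ, ENNReal.toReal_one]
  linarith

lemma VaR_le_VaR_add_of_le_add [IsProbabilityMeasure P] (hα0 : 0 ≤ α) (hα1 : α < 1)
    {X Y : Ω → ℝ} {c : ℝ} (hX : BddBelow (Set.range X)) (hY : BddAbove (Set.range Y))
    (h : ∀ ω, X ω ≤ Y ω + c) :
    VaR P X α ≤ VaR P Y α + c := by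
  refine csSup_le (nonempty_VaR_set_of_bddBelow P hX hα0) fun t ht => ?_
  have hmem : t - c ∈ {t : ℝ | 1 - α ≤ (P {ω | t ≤ Y ω}).toReal} := by
    refine ht.trans (ENNReal.toReal_mono (measure_ne_top P _) (measure_mono fun ω hω => ?_))
    simp only [Set.mem_ofPred_eq] at hω ⊢
    linarith [h ω]
  have hle : t - c ≤ VaR P Y α := le_csSup (bddAbove_VaR_set_of_bddAbove P hY hα1) hmem
  linarith

end VaR

lemma sum_mul_add_mul_le_add_norm_sub {S : Type*} [Fintype S] {p r u v : S → ℝ} {γ : ℝ}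
    (hp0 : ∀ s, 0 ≤ p s) (hp1 : ∑ s, p s = 1) (hγ : 0 ≤ γ) :
    ∑ s, p s * (r s + γ * u s) ≤ ∑ s, p s * (r s + γ * v s) + γ * ‖u - v‖ := by
  have hcoord : ∀ s, u s ≤ v s + ‖u - v‖ := fun s => by
    have := (le_abs_self (u s - v s)).trans (norm_le_pi_norm (u - v) s)
    linarith
  calc ∑ s, p s * (r s + γ * u s)
      ≤ ∑ s, (p s * (r s + γ * v s) + p s * (γ * ‖u - v‖)) := by
        refine Finset.sum_le_sum fun s _ => ?_
        rw [← mul_add]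
        refine mul_le_mul_of_nonneg_left ?_ (hp0 s)
        linarith [mul_le_mul_of_nonneg_left (hcoord s) hγ]
    _ = ∑ s, p s * (r s + γ * v s) + γ * ‖u - v‖ := by
        rw [Finset.sum_add_distrib, ← Finset.sum_mul, hp1, one_mul]

lemma TVaR_le_TVaR_add {S A Ω : Type*} [Fintype S] [Fintype A] [Nonempty A]
    [Finite Ω] [MeasurableSpace Ω] (P : Measure Ω) [IsProbabilityMeasure P]
    {α γ : ℝ} (hα : α ∈ Set.Ioo (0 : ℝ) 1) (hγ : 0 ≤ γ)
    (r : S → A → S → ℝ) (p : S → A → Ω → S → ℝ)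
    (hp : ∀ s a ω, (∀ s', 0 ≤ p s a ω s') ∧ ∑ s' : S, p s a ω s' = 1)
    (u v : S → ℝ) (s : S) :
    TVaR P α γ r p u s ≤ TVaR P α γ r p v s + γ * ‖u - v‖ := by
  refine ciSup_le fun a => ?_
  refine (VaR_le_VaR_add_of_le_add P hα.1.le hα.2 (Set.finite_range _).bddBelow
    (Set.finite_range _).bddAbove
    fun ω => sum_mul_add_mul_le_add_norm_sub (v := v) (hp s a ω).1 (hp s a ω).2 hγ).trans ?_
  gcongr
  exact le_ciSup
    (f := fun a => VaR P (fun ω => ∑ s' : S, p s a ω s' * (r s a s' + γ * v s')) α)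
    (Set.finite_range _).bddAbove a

theorem TVaR_contraction_general
    {S A Ω : Type*} [Fintype S] [Fintype A] [Nonempty A]
    [Fintype Ω] [MeasurableSpace Ω] (P : Measure Ω) [IsProbabilityMeasure P]
    (α γ : ℝ) (hα : α ∈ Set.Ioo (0 : ℝ) 1) (hγ0 : 0 ≤ γ)
    (r : S → A → S → ℝ) (p : S → A → Ω → S → ℝ)
    (hp : ∀ s a ω, (∀ s', 0 ≤ p s a ω s') ∧ ∑ s' : S, p s a ω s' = 1) :
    ∀ u v : S → ℝ, ‖TVaR P α γ r p u - TVaR P α γ r p v‖ ≤ γ * ‖u - v‖ := by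
  intro u v
  refine (pi_norm_le_iff_of_nonneg (by positivity)).mpr fun s => ?_
  rw [Pi.sub_apply, Real.norm_eq_abs, abs_sub_le_iff]
  have huv := TVaR_le_TVaR_add P hα hγ0 r p hp u v s
  have hvu := TVaR_le_TVaR_add P hα hγ0 r p hp v u s
  rw [norm_sub_rev] at hvu
  constructor <;> linarith

/-- the VaR Bellman optimality operator is a γ-contraction in sup-norm. -/
theorem TVaR_contraction
    {S A Ω : Type*} [Fintype S] [Nonempty S] [Fintype A] [Nonempty A]
    [Fintype Ω] [MeasurableSpace Ω] (P : Measure Ω) [IsProbabilityMeasure P]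
    (α γ : ℝ) (hα : α ∈ Set.Ioo (0 : ℝ) 1) (hγ0 : 0 ≤ γ) (hγ1 : γ < 1)
    (r : S → A → S → ℝ) (p : S → A → Ω → S → ℝ)
    (hp : ∀ s a ω, (∀ s', 0 ≤ p s a ω s') ∧ ∑ s' : S, p s a ω s' = 1) :
    ∀ u v : S → ℝ, ‖TVaR P α γ r p u - TVaR P α γ r p v‖ ≤ γ * ‖u - v‖ :=
  TVaR_contraction_general P α γ hα hγ0 r p hp
end

section
/- The VaR Bellman optimality operator T_VaR has a unique fixed point v̂ ∈ ℝ^S satisfying T_VaR v̂ = v̂. -/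
open MeasureTheory

lemma nonempty_of_prob {Ω : Type*} [MeasurableSpace Ω] (P : Measure Ω)
    [IsProbabilityMeasure P] : Nonempty Ω := by
  by_contra h
  rw [not_nonempty_iff] at h
  have h1 : (P Set.univ) = 1 := measure_univ
  rw [Set.univ_eq_empty_iff.mpr h, measure_empty] at h1
  exact zero_ne_one h1

lemma VaR_set_nonempty {Ω : Type*} [Fintype Ω] [Nonempty Ω] [MeasurableSpace Ω]
    (P : Measure Ω) [IsProbabilityMeasure P] (X : Ω → ℝ) {α : ℝ} (hα : 0 ≤ α) :
    {t : ℝ | 1 - α ≤ (P {ω | t ≤ X ω}).toReal}.Nonempty := by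
  obtain ⟨ω0, -, hω0⟩ := Finset.exists_min_image Finset.univ X
    ⟨Classical.arbitrary Ω, Finset.mem_univ _⟩
  refine ⟨X ω0, ?_⟩
  have huniv : {ω | X ω0 ≤ X ω} = Set.univ := by
    ext ω; simp [hω0 ω (Finset.mem_univ ω)]
  simp only [Set.mem_setOf_eq, huniv, measure_univ, ENNReal.toReal_one]
  linarith

lemma VaR_set_bddAbove {Ω : Type*} [Fintype Ω] [Nonempty Ω] [MeasurableSpace Ω]
    (P : Measure Ω) [IsProbabilityMeasure P] (X : Ω → ℝ) {α : ℝ} (hα : α < 1) :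
    BddAbove {t : ℝ | 1 - α ≤ (P {ω | t ≤ X ω}).toReal} := by
  obtain ⟨ω1, -, hω1⟩ := Finset.exists_max_image Finset.univ X
    ⟨Classical.arbitrary Ω, Finset.mem_univ _⟩
  refine ⟨X ω1, fun t ht => ?_⟩
  by_contra h
  push_neg at h
  have hempty : {ω | t ≤ X ω} = ∅ := by
    ext ω
    simp only [Set.mem_setOf_eq, Set.mem_empty_iff_false, iff_false, not_le]
    exact lt_of_le_of_lt (hω1 ω (Finset.mem_univ ω)) h
  rw [Set.mem_setOf_eq, hempty, measure_empty, ENNReal.toReal_zero] at ht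
  linarith

lemma VaR_le_add {Ω : Type*} [Fintype Ω] [MeasurableSpace Ω] (P : Measure Ω)
    [IsProbabilityMeasure P] (X Y : Ω → ℝ) {α c : ℝ} (hα0 : 0 ≤ α) (hα1 : α < 1)
    (h : ∀ ω, X ω ≤ Y ω + c) : VaR P X α ≤ VaR P Y α + c := by
  have hΩ : Nonempty Ω := nonempty_of_prob P
  apply csSup_le (VaR_set_nonempty P X hα0)
  intro t ht
  have hsub : {ω | t ≤ X ω} ⊆ {ω | t - c ≤ Y ω} := by
    intro ω hω
    simp only [Set.mem_setOf_eq] at *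
    linarith [h ω]
  have hmem : (t - c) ∈ {u : ℝ | 1 - α ≤ (P {ω | u ≤ Y ω}).toReal} :=
    le_trans ht (ENNReal.toReal_mono (measure_ne_top P _) (measure_mono hsub))
  have := le_csSup (VaR_set_bddAbove P Y hα1) hmem
  rw [VaR]
  linarith

/-- the VaR Bellman optimality operator has a unique fixed point. -/
theorem TVaR_unique_fixed_point
    {S A Ω : Type*} [Fintype S] [Nonempty S] [Fintype A] [Nonempty A]
    [Fintype Ω] [MeasurableSpace Ω] (P : Measure Ω) [IsProbabilityMeasure P]
    (α γ : ℝ) (hα : α ∈ Set.Ioo (0 : ℝ) 1) (hγ0 : 0 ≤ γ) (hγ1 : γ < 1)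
    (r : S → A → S → ℝ) (p : S → A → Ω → S → ℝ)
    (hp : ∀ s a ω, (∀ s', 0 ≤ p s a ω s') ∧ ∑ s' : S, p s a ω s' = 1) :
    ∃! v : S → ℝ, TVaR P α γ r p v = v := by
  have hΩ : Nonempty Ω := nonempty_of_prob P
  -- key one-sided estimate
  have key : ∀ v w : S → ℝ, ∀ s : S,
      TVaR P α γ r p v s ≤ TVaR P α γ r p w s + γ * dist v w := by
    intro v w s
    have hb : ∀ a : A,
        VaR P (fun ω => ∑ s' : S, p s a ω s' * (r s a s' + γ * v s')) α
          ≤ VaR P (fun ω => ∑ s' : S, p s a ω s' * (r s a s' + γ * w s')) α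
            + γ * dist v w := by
      intro a
      apply VaR_le_add P _ _ hα.1.le hα.2
      intro ω
      have hsum : ∑ s' : S, p s a ω s' * (r s a s' + γ * v s')
          ≤ ∑ s' : S, (p s a ω s' * (r s a s' + γ * w s')
              + p s a ω s' * (γ * dist v w)) := by
        apply Finset.sum_le_sum
        intro s' _
        have h1 : dist (v s') (w s') ≤ dist v w := dist_le_pi_dist v w s'
        rw [Real.dist_eq] at h1
        have h2 : v s' - w s' ≤ dist v w := le_trans (le_abs_self _) h1
        have h3 : p s a ω s' * γ * (v s' - w s') ≤ p s a ω s' * γ * dist v w :=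
          mul_le_mul_of_nonneg_left h2 (mul_nonneg ((hp s a ω).1 s') hγ0)
        have h4 : p s a ω s' * (r s a s' + γ * v s')
            = p s a ω s' * (r s a s' + γ * w s') + p s a ω s' * γ * (v s' - w s') := by ring
        have h5 : p s a ω s' * γ * dist v w = p s a ω s' * (γ * dist v w) := by ring
        linarith
      calc ∑ s' : S, p s a ω s' * (r s a s' + γ * v s')
          ≤ ∑ s' : S, (p s a ω s' * (r s a s' + γ * w s')
              + p s a ω s' * (γ * dist v w)) := hsum
        _ = (∑ s' : S, p s a ω s' * (r s a s' + γ * w s'))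
              + (∑ s' : S, p s a ω s') * (γ * dist v w) := by
            rw [Finset.sum_add_distrib, Finset.sum_mul]
        _ = (∑ s' : S, p s a ω s' * (r s a s' + γ * w s')) + γ * dist v w := by
            rw [(hp s a ω).2, one_mul]
    show (⨆ a : A, VaR P (fun ω => ∑ s' : S, p s a ω s' * (r s a s' + γ * v s')) α)
        ≤ (⨆ a : A, VaR P (fun ω => ∑ s' : S, p s a ω s' * (r s a s' + γ * w s')) α)
          + γ * dist v w
    apply ciSup_le
    intro a
    refine le_trans (hb a) (add_le_add_left ?_ _)
    exact le_ciSup (f := fun a : A =>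
      VaR P (fun ω => ∑ s' : S, p s a ω s' * (r s a s' + γ * w s')) α)
      (Set.Finite.bddAbove (Set.finite_range _)) a
  -- Lipschitz
  have hlip : ∀ v w : S → ℝ,
      dist (TVaR P α γ r p v) (TVaR P α γ r p w) ≤ γ * dist v w := by
    intro v w
    rw [dist_pi_le_iff (by positivity)]
    intro s
    rw [Real.dist_eq, abs_sub_le_iff]
    constructor
    · linarith [key v w s]
    · have hd : γ * dist w v = γ * dist v w := by rw [dist_comm]
      linarith [key w v s]
  set K : NNReal := ⟨γ, hγ0⟩ with hK
  have hC : ContractingWith K (TVaR P α γ r p) := by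
    constructor
    · exact_mod_cast hγ1
    · exact LipschitzWith.of_dist_le_mul fun v w => hlip v w
  refine ⟨hC.fixedPoint (TVaR P α γ r p), hC.fixedPoint_isFixedPt, ?_⟩
  intro y hy
  exact hC.fixedPoint_unique hy
end

section
/- Let T̂ be a monotone γ-contraction Bellman optimality operator on ℝ^S with fixed point û, and let π be a policy greedy with respect to u_k (i.e., T̂^π u_k = T̂ u_k where T̂^π is the corresponding γ-contraction evaluation operator with fixed point u_π). If ‖û − u_k‖_∞ ≤ ε, then ‖û − u_π‖_∞ ≤ 2γε/(1−γ). -/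
/-- greedy-policy error bound. If T̂ is a monotone γ-contraction with
fixed point û; T̂^π is monotone, γ-contractive, satisfies
T̂^π(v + c·𝟏) = T̂^π v + γc·𝟏, T̂^π v ≤ T̂ v for all v, T̂^π u_k = T̂ u_k (π greedy
w.r.t. u_k), with fixed point u_π; and ‖û − u_k‖ ≤ ε, then ‖û − u_π‖ ≤ 2γε/(1−γ). -/
theorem greedy_policy_error_bound
    {S : Type*} [Fintype S] [Nonempty S]
    (γ : ℝ) (hγ0 : 0 < γ) (hγ1 : γ < 1) (ε : ℝ) (hε : 0 ≤ ε)
    (That Tpi : (S → ℝ) → (S → ℝ))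
    (hThatMono : ∀ u v : S → ℝ, u ≤ v → That u ≤ That v)
    (hThatContr : ∀ u v : S → ℝ, ‖That u - That v‖ ≤ γ * ‖u - v‖)
    (hTpiMono : ∀ u v : S → ℝ, u ≤ v → Tpi u ≤ Tpi v)
    (hTpiContr : ∀ u v : S → ℝ, ‖Tpi u - Tpi v‖ ≤ γ * ‖u - v‖)
    (hTpiTrans : ∀ (v : S → ℝ) (c : ℝ), Tpi (v + fun _ => c) = Tpi v + fun _ => γ * c)
    (hTpiLe : ∀ v : S → ℝ, Tpi v ≤ That v)
    (uhat uk upi : S → ℝ)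
    (huhat : That uhat = uhat) (hupi : Tpi upi = upi)
    (hgreedy : Tpi uk = That uk)
    (hclose : ‖uhat - uk‖ ≤ ε) :
    ‖uhat - upi‖ ≤ 2 * γ * ε / (1 - γ) := by
  have h1 : ‖uhat - Tpi uhat‖ ≤ 2 * γ * ε := by
    have e : uhat - Tpi uhat = (That uhat - That uk) + (Tpi uk - Tpi uhat) := by
      rw [huhat, hgreedy]; abel
    calc ‖uhat - Tpi uhat‖ ≤ ‖That uhat - That uk‖ + ‖Tpi uk - Tpi uhat‖ := by
          rw [e]; exact norm_add_le _ _
      _ ≤ γ * ‖uhat - uk‖ + γ * ‖uk - uhat‖ := add_le_add (hThatContr _ _) (hTpiContr _ _)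
      _ = 2 * γ * ‖uhat - uk‖ := by rw [norm_sub_rev uk]; ring
      _ ≤ 2 * γ * ε := by nlinarith [norm_nonneg (uhat - uk)]
  have h2 : ‖uhat - upi‖ ≤ ‖uhat - Tpi uhat‖ + γ * ‖uhat - upi‖ := by
    have e : uhat - upi = (uhat - Tpi uhat) + (Tpi uhat - Tpi upi) := by
      rw [hupi]; abel
    calc ‖uhat - upi‖ ≤ ‖uhat - Tpi uhat‖ + ‖Tpi uhat - Tpi upi‖ := by
          rw [e]; exact norm_add_le _ _
      _ ≤ ‖uhat - Tpi uhat‖ + γ * ‖uhat - upi‖ := by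
          have := hTpiContr uhat upi; linarith
  rw [le_div_iff₀ (by linarith)]; nlinarith
end
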